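/- arXiv:1809.06524 — 3 statements merged into one kernel-verified Lean document; each statement's English description precedes it below -/
import Mathlib

section
/- If M is a finitely generated graded indecomposable module over a graded noetherian locally finite connected ℕ-graded algebra R over a field k, then the ring of degree-0 graded endomorphisms of M is a local ring. -/
/-!
Fitting's lemma, degree by degree. For a degree-0 endomorphism `φ`, the generalized kernel
`⨆ n, ker φⁿ` and the stable image `⨅ n, range φⁿ` are graded submodules, and in each degree
they cut out the Fitting decomposition of the finite-dimensional piece `ℳ i` under `φ`; hence
they are complementary. By indecomposability one of them vanishes: either `φ` is injective,
hence bijective on every piece and a unit, or `φ` is nilpotent on every piece and `1 - φ` is a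
unit.
-/

/-- The ring of degree-0 graded endomorphisms of a graded module, as a subring
of `Module.End A M`. -/
def gradedEnd0 (k A : Type) [Field k] [Ring A] [Algebra k A]
    (M : Type) [AddCommGroup M] [Module A M] [Module k M] [IsScalarTower k A M]
    (ℳ : ℤ → Submodule k M) :
    Subring (Module.End A M) where
  carrier := {φ | ∀ (i : ℤ) (m : M), m ∈ ℳ i → φ m ∈ ℳ i}
  mul_mem' := by
    intro φ ψ hφ hψ i m hm
    exact hφ i _ (hψ i m hm)
  one_mem' := by
    intro i m hm
    exact hm
  add_mem' := by
    intro φ ψ hφ hψ i m hm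
    exact (ℳ i).add_mem (hφ i m hm) (hψ i m hm)
  zero_mem' := by
    intro i m hm
    exact (ℳ i).zero_mem
  neg_mem' := by
    intro φ hφ i m hm
    exact (ℳ i).neg_mem (hφ i m hm)

open DirectSum

namespace Submodule

variable {ι k A M : Type*} [Semiring k] [Semiring A] [AddCommMonoid M] [Module k M] [Module A M]
  [SMul k A] [IsScalarTower k A M] (ℳ : ι → Submodule k M)

def degreeSlice (i : ι) (P : Submodule A M) : Submodule k (ℳ i) :=
  (P.restrictScalars k).comap (ℳ i).subtype

@[simp]
theorem mem_degreeSlice {i : ι} {P : Submodule A M} {x : ℳ i} :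
    x ∈ P.degreeSlice ℳ i ↔ (x : M) ∈ P :=
  Iff.rfl

variable [DecidableEq ι] [Decomposition ℳ]

theorem isCompl_of_isCompl_degreeSlice {P Q : Submodule A M}
    (hP : SetLike.IsHomogeneous ℳ P) (hQ : SetLike.IsHomogeneous ℳ Q)
    (h : ∀ i, IsCompl (P.degreeSlice ℳ i) (Q.degreeSlice ℳ i)) : IsCompl P Q := by
  constructor
  · refine disjoint_iff.mpr <| AddSubmonoidClass.IsHomogeneous.ext (ℳ := ℳ)
      (fun i x hx => mem_inf.mpr ⟨hP i (mem_inf.mp hx).1, hQ i (mem_inf.mp hx).2⟩)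
      (fun i x hx => ?_) fun i x hx => ?_
    · rw [(mem_bot A).mp hx, decompose_zero, DirectSum.zero_apply, ZeroMemClass.coe_zero]
      exact zero_mem _
    · refine ⟨fun hPQ => ?_, fun h0 => ((mem_bot A).mp h0).symm ▸ zero_mem _⟩
      simpa [Subtype.ext_iff] using (h i).disjoint.le_bot (x := ⟨x, hx⟩) (mem_inf.mp hPQ)
  · refine codisjoint_iff.mpr (eq_top_iff'.mpr fun x => ?_)
    induction x using Decomposition.inductionOn ℳ with
    | zero => exact zero_mem _
    | add x y hx hy => exact add_mem hx hy
    | homogeneous x =>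
      obtain ⟨p, hp, q, hq, hpq⟩ := mem_sup.mp ((h _).codisjoint.eq_top ▸ mem_top : x ∈ _)
      rw [← hpq, coe_add]
      exact add_mem_sup hp hq

end Submodule

theorem Module.End.mem_iSup_ker_pow_iff {R N : Type*} [Semiring R] [AddCommMonoid N]
    [Module R N] {f : Module.End R N} {x : N} :
    x ∈ ⨆ n, LinearMap.ker (f ^ n) ↔ ∃ n, (f ^ n) x = 0 :=
  Submodule.mem_iSup_of_directed _ f.iterateKer.monotone.directed_le

namespace gradedEnd0

variable {k A M : Type} [Field k] [Ring A] [Algebra k A] [AddCommGroup M] [Module A M]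
  [Module k M] [IsScalarTower k A M] {ℳ : ℤ → Submodule k M}

def restrictDeg (i : ℤ) : gradedEnd0 k A M ℳ →+* Module.End k (ℳ i) where
  toFun φ := ((φ : Module.End A M).restrictScalars k).restrict (φ.2 i)
  map_one' := rfl
  map_mul' _ _ := rfl
  map_zero' := rfl
  map_add' _ _ := rfl

@[simp]
theorem restrictDeg_apply_coe (i : ℤ) (φ : gradedEnd0 k A M ℳ) (x : ℳ i) :
    (restrictDeg i φ x : M) = (φ : Module.End A M) x :=
  rfl

theorem restrictDeg_pow_apply_coe (i : ℤ) (φ : gradedEnd0 k A M ℳ) (n : ℕ) (x : ℳ i) :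
    ((restrictDeg i φ ^ n) x : M) = ((φ : Module.End A M) ^ n) x := by
  rw [← map_pow, restrictDeg_apply_coe, Subring.coe_pow]

theorem degreeSlice_iSup_ker_pow (φ : gradedEnd0 k A M ℳ) (i : ℤ) :
    (⨆ n, LinearMap.ker ((φ : Module.End A M) ^ n)).degreeSlice ℳ i =
      ⨆ n, LinearMap.ker (restrictDeg i φ ^ n) := by
  ext x
  simp only [Submodule.mem_degreeSlice, Module.End.mem_iSup_ker_pow_iff, Subtype.ext_iff,
    restrictDeg_pow_apply_coe, ZeroMemClass.coe_zero]

variable [Decomposition ℳ]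

theorem decompose_apply (φ : gradedEnd0 k A M ℳ) (x : M) (i : ℤ) :
    (decompose ℳ ((φ : Module.End A M) x) i : M) = (φ : Module.End A M) (decompose ℳ x i) := by
  induction x using Decomposition.inductionOn ℳ with
  | zero => simp
  | add x y hx hy =>
    simp only [map_add, decompose_add, DirectSum.add_apply, Submodule.coe_add, hx, hy]
  | @homogeneous j x =>
    obtain rfl | hij := eq_or_ne i j
    · rw [decompose_of_mem_same ℳ (φ.2 i x x.2), decompose_of_mem_same ℳ x.2]
    · rw [decompose_of_mem_ne ℳ (φ.2 j x x.2) hij.symm, decompose_of_mem_ne ℳ x.2 hij.symm,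
        map_zero]

theorem range_restrictDeg (φ : gradedEnd0 k A M ℳ) (i : ℤ) :
    LinearMap.range (restrictDeg i φ) =
      (LinearMap.range (φ : Module.End A M)).degreeSlice ℳ i := by
  ext x
  simp only [Submodule.mem_degreeSlice, LinearMap.mem_range, Subtype.ext_iff,
    restrictDeg_apply_coe]
  refine ⟨fun ⟨y, hy⟩ => ⟨y, hy⟩, fun ⟨y, hy⟩ => ⟨decompose ℳ y i, ?_⟩⟩
  rw [← decompose_apply, hy, decompose_of_mem_same ℳ x.2]

theorem isHomogeneous_iSup_ker_pow (φ : gradedEnd0 k A M ℳ) :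
    SetLike.IsHomogeneous ℳ (⨆ n, LinearMap.ker ((φ : Module.End A M) ^ n)) := by
  intro i x hx
  obtain ⟨n, hn⟩ := Module.End.mem_iSup_ker_pow_iff.mp hx
  refine Module.End.mem_iSup_ker_pow_iff.mpr ⟨n, ?_⟩
  rw [← Subring.coe_pow, ← decompose_apply, Subring.coe_pow, hn, decompose_zero,
    DirectSum.zero_apply, ZeroMemClass.coe_zero]

theorem isHomogeneous_iInf_range_pow (φ : gradedEnd0 k A M ℳ) :
    SetLike.IsHomogeneous ℳ (⨅ n, LinearMap.range ((φ : Module.End A M) ^ n)) := by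
  intro i x hx
  refine Submodule.mem_iInf _ |>.mpr fun n => ?_
  obtain ⟨y, hy⟩ := Submodule.mem_iInf _ |>.mp hx n
  refine ⟨decompose ℳ y i, ?_⟩
  rw [← Subring.coe_pow, ← decompose_apply, Subring.coe_pow, hy]

theorem degreeSlice_iInf_range_pow (φ : gradedEnd0 k A M ℳ) (i : ℤ) :
    (⨅ n, LinearMap.range ((φ : Module.End A M) ^ n)).degreeSlice ℳ i =
      ⨅ n, LinearMap.range (restrictDeg i φ ^ n) := by
  ext x
  simp only [Submodule.mem_degreeSlice, Submodule.mem_iInf, ← map_pow, range_restrictDeg,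
    Subring.coe_pow]

theorem isCompl_iSup_ker_pow_iInf_range_pow [∀ i, FiniteDimensional k (ℳ i)]
    (φ : gradedEnd0 k A M ℳ) :
    IsCompl (⨆ n, LinearMap.ker ((φ : Module.End A M) ^ n))
      (⨅ n, LinearMap.range ((φ : Module.End A M) ^ n)) := by
  refine Submodule.isCompl_of_isCompl_degreeSlice ℳ (isHomogeneous_iSup_ker_pow φ)
    (isHomogeneous_iInf_range_pow φ) fun i => ?_
  rw [degreeSlice_iSup_ker_pow, degreeSlice_iInf_range_pow]
  exact LinearMap.isCompl_iSup_ker_pow_iInf_range_pow _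

theorem isUnit_of_forall_isUnit_restrictDeg {φ : gradedEnd0 k A M ℳ}
    (h : ∀ i, IsUnit (restrictDeg i φ)) : IsUnit φ := by
  have hbij i : Function.Bijective (restrictDeg i φ) := (Module.End.isUnit_iff _).mp (h i)
  have hinj : Function.Injective (φ : Module.End A M) := by
    refine (injective_iff_map_eq_zero _).mpr fun x hx => (decompose ℳ).injective ?_
    refine DFinsupp.ext fun i => Subtype.ext ?_
    have hxi : restrictDeg i φ (decompose ℳ x i) = 0 :=
      Subtype.ext (by rw [restrictDeg_apply_coe, ← decompose_apply, hx]; simp)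
    simp [(injective_iff_map_eq_zero _).mp (hbij i).injective _ hxi]
  have hsurj : Function.Surjective (φ : Module.End A M) := by
    intro x
    induction x using Decomposition.inductionOn ℳ with
    | zero => exact ⟨0, map_zero _⟩
    | add x y hx hy =>
      obtain ⟨x', rfl⟩ := hx
      obtain ⟨y', rfl⟩ := hy
      exact ⟨x' + y', map_add _ _ _⟩
    | @homogeneous i x =>
      obtain ⟨y, hy⟩ := (hbij i).surjective x
      exact ⟨y, congrArg Subtype.val hy⟩
  let e := LinearEquiv.ofBijective (φ : Module.End A M) ⟨hinj, hsurj⟩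
  have he : (e.symm : Module.End A M) ∈ gradedEnd0 k A M ℳ := by
    intro i x hx
    obtain ⟨y, hy⟩ := (hbij i).surjective ⟨x, hx⟩
    have : e.symm x = y := e.symm_apply_eq.mpr (congrArg Subtype.val hy).symm
    simp [this]
  exact isUnit_iff_exists.mpr ⟨⟨e.symm, he⟩, Subtype.ext (LinearMap.ext e.apply_symm_apply),
    Subtype.ext (LinearMap.ext e.symm_apply_apply)⟩

variable [∀ i, FiniteDimensional k (ℳ i)]

theorem isUnit_of_injective {φ : gradedEnd0 k A M ℳ}
    (hφ : Function.Injective (φ : Module.End A M)) : IsUnit φ :=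
  isUnit_of_forall_isUnit_restrictDeg fun _ => (LinearMap.isUnit_iff_ker_eq_bot _).mpr <|
    LinearMap.ker_eq_bot.mpr fun _ _ hxy => Subtype.ext (hφ (congrArg Subtype.val hxy))

theorem isUnit_one_sub_of_forall_exists_pow_apply_eq_zero {φ : gradedEnd0 k A M ℳ}
    (hφ : ∀ x, ∃ n, ((φ : Module.End A M) ^ n) x = 0) : IsUnit (1 - φ) := by
  refine isUnit_of_forall_isUnit_restrictDeg fun i => ?_
  rw [map_sub, map_one]
  refine IsNilpotent.isUnit_one_sub <|
    ((LinearMap.charpoly_nilpotent_tfae _).out 0 2).mpr fun x => ?_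
  obtain ⟨n, hn⟩ := hφ x
  exact ⟨n, Subtype.ext (by rw [restrictDeg_pow_apply_coe, hn, ZeroMemClass.coe_zero])⟩

end gradedEnd0

theorem stmt_1_general (k A : Type) [Field k] [Ring A] [Algebra k A]
    (M : Type) [AddCommGroup M] [Module A M] [Module k M] [IsScalarTower k A M]
    (ℳ : ℤ → Submodule k M) [DirectSum.Decomposition ℳ]
    (hMlf : ∀ i, FiniteDimensional k (ℳ i))
    -- `M` is indecomposable (in the category of f.g. graded modules)
    (hM0 : Nontrivial M)
    (hind : ∀ P Q : Submodule A M,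
      (∀ (i : ℤ) (x : M), x ∈ P → (DirectSum.decompose ℳ x i : M) ∈ P) →
      (∀ (i : ℤ) (x : M), x ∈ Q → (DirectSum.decompose ℳ x i : M) ∈ Q) →
      IsCompl P Q → P = ⊥ ∨ Q = ⊥) :
    IsLocalRing (gradedEnd0 k A M ℳ) := by
  refine IsLocalRing.of_isUnit_or_isUnit_one_sub_self fun φ => ?_
  have hfitting := gradedEnd0.isCompl_iSup_ker_pow_iInf_range_pow φ
  obtain hP | hQ := hind _ _ (fun i _ hx => gradedEnd0.isHomogeneous_iSup_ker_pow φ i hx)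
    (fun i _ hx => gradedEnd0.isHomogeneous_iInf_range_pow φ i hx) hfitting
  · refine .inl (gradedEnd0.isUnit_of_injective (LinearMap.ker_eq_bot.mp (eq_bot_iff.mpr ?_)))
    exact hP ▸ le_iSup_of_le 1 (pow_one (φ : Module.End A M) ▸ le_rfl)
  · refine .inr (gradedEnd0.isUnit_one_sub_of_forall_exists_pow_apply_eq_zero fun x => ?_)
    exact Module.End.mem_iSup_ker_pow_iff.mp (eq_top_of_isCompl_bot (hQ ▸ hfitting) ▸ trivial)

/-- if `M` is a finitely generated graded indecomposable module
over a graded noetherian, locally finite, connected ℕ-graded `k`-algebra, then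
the degree-0 graded endomorphism ring of `M` is a local ring. -/
theorem stmt_1 (k A : Type) [Field k] [Ring A] [Algebra k A]
    (𝒜 : ℕ → Submodule k A) [GradedAlgebra 𝒜]
    (hconn : ∀ a ∈ 𝒜 0, ∃ c : k, a = algebraMap k A c)
    (hlf : ∀ i, FiniteDimensional k (𝒜 i))
    [IsNoetherianRing A]
    (M : Type) [AddCommGroup M] [Module A M] [Module k M] [IsScalarTower k A M]
    [Module.Finite A M]
    (ℳ : ℤ → Submodule k M) [DirectSum.Decomposition ℳ]
    (hMsmul : ∀ (i : ℕ) (j : ℤ) (a : A) (m : M),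
      a ∈ 𝒜 i → m ∈ ℳ j → a • m ∈ ℳ ((i : ℤ) + j))
    (hMbdd : ∃ n₀ : ℤ, ∀ n < n₀, ℳ n = ⊥)
    (hMlf : ∀ i, FiniteDimensional k (ℳ i))
    -- `M` is indecomposable (in the category of f.g. graded modules)
    (hM0 : Nontrivial M)
    (hind : ∀ P Q : Submodule A M,
      (∀ (i : ℤ) (x : M), x ∈ P → (DirectSum.decompose ℳ x i : M) ∈ P) →
      (∀ (i : ℤ) (x : M), x ∈ Q → (DirectSum.decompose ℳ x i : M) ∈ Q) →
      IsCompl P Q → P = ⊥ ∨ Q = ⊥) :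
    IsLocalRing (gradedEnd0 k A M ℳ) :=
  stmt_1_general k A M ℳ hMlf hM0 hind
end

section
/- Let q ∈ k be nonzero, n ≥ 1, and C = k⟨a₁,a₂,a₃⟩/(a₂a₁ − qⁿa₁a₂, a₃a₁ − q^{n²}a₁a₃, a₃a₂ − qⁿa₂a₃), with grading deg a₁ = deg a₃ = n, deg a₂ = 2. Then f = a₂ⁿ − q^{n(n−1)/2} a₁a₃ is a normal element of C, satisfying a₁ f = q^{−n²} f a₁, a₂ f = f a₂, and a₃ f = q^{n²} f a₃; moreover, for any p ∈ k with p² = q^{−n²}, the assignments τ(a₁) = p a₁, τ(a₂) = a₂, τ(a₃) = p^{−1} a₃ define a graded automorphism τ of C with τ² = σ (the normalizing automorphism of f) and τ(f) = f. -/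
/-- The defining relations of the skew polynomial algebra
`C = k⟨a₁,a₂,a₃⟩/(a₂a₁ − qⁿa₁a₂, a₃a₁ − q^{n²}a₁a₃, a₃a₂ − qⁿa₂a₃)`. -/
def rel18 (k : Type) [Field k] (q : k) (n : ℕ) :
    FreeAlgebra k (Fin 3) → FreeAlgebra k (Fin 3) → Prop := fun x y =>
  letI a : Fin 3 → FreeAlgebra k (Fin 3) := fun i => FreeAlgebra.ι k i
  (x = a 1 * a 0 ∧ y = (q ^ n) • (a 0 * a 1)) ∨
  (x = a 2 * a 0 ∧ y = (q ^ (n ^ 2)) • (a 0 * a 2)) ∨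
  (x = a 2 * a 1 ∧ y = (q ^ n) • (a 1 * a 2))

/-- The algebra `C` of case (g). -/
abbrev C18 (k : Type) [Field k] (q : k) (n : ℕ) : Type := RingQuot (rel18 k q n)

/-- The generators `a₁, a₂, a₃` of `C18`. -/
noncomputable def gen18 (k : Type) [Field k] (q : k) (n : ℕ) (i : Fin 3) :
    C18 k q n :=
  RingQuot.mkAlgHom k (rel18 k q n) (FreeAlgebra.ι k i)

/-!
All three relations of `C` are `aⱼ aᵢ = λ aᵢ aⱼ`, so moving `a₁` or `a₃` past `a₂ⁿ` costs
`(qⁿ)ⁿ = q^{n²}`, the same factor as moving it past `a₃` resp. `a₁` in `a₁a₃`; hence both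
monomials of `f` are twisted by the same scalar and `f` is normal, for any coefficient in
front of `a₁a₃`. Since every relation is homogeneous in each generator separately, any
diagonal rescaling of the generators is an algebra endomorphism of `C`; these compose by
multiplying the weights, so `τ = diag(p, 1, p⁻¹)` is invertible, `τ² = diag(q^{-n²}, 1, q^{n²})`
is the normalizing automorphism of `f`, and `τ` fixes `a₂` and `a₁a₃`.
-/

section SkewCommute

variable {R A : Type*} [CommSemiring R] [Semiring A] [Algebra R A] {x y : A} {s : R}

theorem pow_mul_eq_smul_mul_pow (h : y * x = s • (x * y)) (m : ℕ) :
    y ^ m * x = s ^ m • (x * y ^ m) := by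
  induction m with
  | zero => simp
  | succ m ih =>
    rw [pow_succ' y m, mul_assoc, ih, mul_smul_comm, ← mul_assoc, h,
      smul_mul_assoc, mul_assoc, smul_smul, ← pow_succ', ← pow_succ]

theorem mul_pow_eq_smul_pow_mul (h : y * x = s • (x * y)) (m : ℕ) :
    y * x ^ m = s ^ m • (x ^ m * y) := by
  induction m with
  | zero => simp
  | succ m ih =>
    rw [pow_succ x m, ← mul_assoc, ih, smul_mul_assoc, mul_assoc, h,
      mul_smul_comm, smul_smul, ← mul_assoc, ← pow_succ, ← pow_succ]

theorem smul_mul_smul_eq_smul_mul_smul (h : y * x = s • (x * y)) (a b : R) :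
    (b • y) * (a • x) = s • ((a • x) * (b • y)) := by
  rw [smul_mul_smul, smul_mul_smul, h, smul_smul, smul_smul, mul_comm a b, mul_comm (b * a)]

end SkewCommute

theorem FreeAlgebra.mul_eq_mul_map_of_surjective {R X A : Type*} [CommSemiring R] [Semiring A]
    [Algebra R A] (π : FreeAlgebra R X →ₐ[R] A) (hπ : Function.Surjective π)
    (σ : A →ₐ[R] A) (f : A) (h : ∀ i, π (ι R i) * f = f * σ (π (ι R i))) (c : A) :
    c * f = f * σ c := by
  obtain ⟨c, rfl⟩ := hπ c
  induction c using FreeAlgebra.induction with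
  | grade0 r => simp only [AlgHom.commutes, Algebra.commutes]
  | grade1 i => exact h i
  | mul x y hx hy => rw [map_mul, map_mul, mul_assoc, hy, ← mul_assoc, hx, mul_assoc]
  | add x y hx hy => rw [map_add, map_add, add_mul, mul_add, hx, hy]

namespace C18

variable {k : Type} [Field k] {q : k} {n : ℕ}

-- `a i` is the paper's `aᵢ₊₁`.
local notation "a" => gen18 k q n

theorem gen_one_mul_gen_zero : a 1 * a 0 = (q ^ n) • (a 0 * a 1) := by
  simpa [gen18] using RingQuot.mkAlgHom_rel k (s := rel18 k q n) (Or.inl ⟨rfl, rfl⟩)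

theorem gen_two_mul_gen_zero : a 2 * a 0 = (q ^ (n ^ 2)) • (a 0 * a 2) := by
  simpa [gen18] using RingQuot.mkAlgHom_rel k (s := rel18 k q n) (Or.inr (Or.inl ⟨rfl, rfl⟩))

theorem gen_two_mul_gen_one : a 2 * a 1 = (q ^ n) • (a 1 * a 2) := by
  simpa [gen18] using RingQuot.mkAlgHom_rel k (s := rel18 k q n) (Or.inr (Or.inr ⟨rfl, rfl⟩))

theorem algHom_ext {B : Type*} [Semiring B] [Algebra k B] {φ ψ : C18 k q n →ₐ[k] B}
    (h : ∀ i, φ (a i) = ψ (a i)) : φ = ψ :=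
  RingQuot.ringQuot_ext' _ _ _ (FreeAlgebra.hom_ext (funext h))

theorem mul_eq_mul_map_of_gen (σ : C18 k q n →ₐ[k] C18 k q n) (f : C18 k q n)
    (h : ∀ i, a i * f = f * σ (a i)) (c : C18 k q n) : c * f = f * σ c :=
  FreeAlgebra.mul_eq_mul_map_of_surjective _ (RingQuot.mkAlgHom_surjective k _) σ f h c

section Normal

variable (c : k)

noncomputable def normalElt : C18 k q n := a 1 ^ n - c • (a 0 * a 2)

theorem normalElt_mul_gen_zero : normalElt c * a 0 = (q ^ (n ^ 2)) • (a 0 * normalElt c) := by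
  rw [normalElt, mul_sub, sub_mul, smul_sub, pow_mul_eq_smul_mul_pow gen_one_mul_gen_zero,
    ← pow_mul, ← sq, smul_mul_assoc, mul_assoc, gen_two_mul_gen_zero, mul_smul_comm,
    mul_smul_comm, smul_comm c]

theorem gen_one_mul_normalElt : a 1 * normalElt c = normalElt c * a 1 := by
  rw [normalElt, mul_sub, sub_mul, ← pow_succ', pow_succ, mul_smul_comm, smul_mul_assoc,
    ← mul_assoc, gen_one_mul_gen_zero, mul_assoc (a 0), gen_two_mul_gen_one, smul_mul_assoc,
    mul_smul_comm, mul_assoc]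

theorem gen_two_mul_normalElt : a 2 * normalElt c = (q ^ (n ^ 2)) • (normalElt c * a 2) := by
  rw [normalElt, mul_sub, sub_mul, smul_sub, mul_pow_eq_smul_pow_mul gen_two_mul_gen_one,
    ← pow_mul, ← sq, mul_smul_comm, smul_mul_assoc, ← mul_assoc, gen_two_mul_gen_zero,
    smul_mul_assoc, smul_comm c, mul_assoc]

end Normal

noncomputable def scale (w : Fin 3 → k) : C18 k q n →ₐ[k] C18 k q n :=
  RingQuot.liftAlgHom k
    ⟨FreeAlgebra.lift k (fun i => w i • a i), by
      rintro x y (⟨rfl, rfl⟩ | ⟨rfl, rfl⟩ | ⟨rfl, rfl⟩) <;>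
        simp only [map_mul, map_smul, FreeAlgebra.lift_ι_apply]
      · exact smul_mul_smul_eq_smul_mul_smul gen_one_mul_gen_zero _ _
      · exact smul_mul_smul_eq_smul_mul_smul gen_two_mul_gen_zero _ _
      · exact smul_mul_smul_eq_smul_mul_smul gen_two_mul_gen_one _ _⟩

@[simp]
theorem scale_gen (w : Fin 3 → k) (i : Fin 3) : scale w (a i) = w i • a i := by
  rw [gen18, scale, RingQuot.liftAlgHom_mkAlgHom_apply, FreeAlgebra.lift_ι_apply, gen18]

theorem scale_comp_scale (v w : Fin 3 → k) :
    (scale v).comp (scale w) = (scale (v * w) : C18 k q n →ₐ[k] C18 k q n) :=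
  algHom_ext fun i => by simp [smul_smul, mul_comm]

theorem scale_one : (scale 1 : C18 k q n →ₐ[k] C18 k q n) = AlgHom.id k _ :=
  algHom_ext fun i => by simp

theorem scale_bijective {w : Fin 3 → k} (hw : ∀ i, w i ≠ 0) :
    Function.Bijective (scale w : C18 k q n →ₐ[k] C18 k q n) := by
  have inv_mul : w⁻¹ * w = 1 := funext fun i => inv_mul_cancel₀ (hw i)
  have mul_inv : w * w⁻¹ = 1 := funext fun i => mul_inv_cancel₀ (hw i)
  refine Function.bijective_iff_has_inverse.mpr ⟨scale w⁻¹, fun x => ?_, fun x => ?_⟩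
  · rw [← AlgHom.comp_apply, scale_comp_scale, inv_mul, scale_one, AlgHom.id_apply]
  · rw [← AlgHom.comp_apply, scale_comp_scale, mul_inv, scale_one, AlgHom.id_apply]

theorem scale_normalElt {w : Fin 3 → k} (hw₁ : w 1 = 1) (hw₀₂ : w 0 * w 2 = 1) (c : k) :
    scale w (normalElt c : C18 k q n) = normalElt c := by
  rw [normalElt, map_sub, map_pow, map_smul, map_mul, scale_gen, scale_gen, scale_gen, hw₁,
    one_smul, smul_mul_smul, hw₀₂, one_smul]

theorem mul_normalElt (hq : q ≠ 0) (c : k) (x : C18 k q n) :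
    x * normalElt c = normalElt c * scale ![(q ^ (n ^ 2))⁻¹, 1, q ^ (n ^ 2)] x := by
  refine mul_eq_mul_map_of_gen _ _ (fun i => ?_) x
  have hQ : q ^ (n ^ 2) ≠ 0 := pow_ne_zero _ hq
  fin_cases i <;> simp only [scale_gen, mul_smul_comm] <;> simp
  · rw [eq_inv_smul_iff₀ hQ, normalElt_mul_gen_zero]
  · exact gen_one_mul_normalElt c
  · exact gen_two_mul_normalElt c

end C18

theorem stmt_18_general (k : Type) [Field k]
    (q : k) (hq : q ≠ 0) (n : ℕ) :
    letI a : Fin 3 → C18 k q n := gen18 k q n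
    letI f : C18 k q n := a 1 ^ n - (q ^ (n * (n - 1) / 2)) • (a 0 * a 2)
    -- the normality identities
    (a 0 * f = (q ^ (n ^ 2))⁻¹ • (f * a 0)) ∧
    (a 1 * f = f * a 1) ∧
    (a 2 * f = (q ^ (n ^ 2)) • (f * a 2)) ∧
    -- f is normal: c f = f σ(c) for an automorphism σ, and for any square
    -- root p of q^{−n²} the map τ below is an automorphism with τ² = σ and
    -- τ(f) = f
    (∀ p : k, p ^ 2 = (q ^ (n ^ 2))⁻¹ →
      ∃ τ : C18 k q n →ₐ[k] C18 k q n,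
        τ (a 0) = p • a 0 ∧ τ (a 1) = a 1 ∧ τ (a 2) = p⁻¹ • a 2 ∧
        Function.Bijective τ ∧ τ f = f ∧
        (∀ c : C18 k q n, c * f = f * τ (τ c))) := by
  have hQ : q ^ (n ^ 2) ≠ 0 := pow_ne_zero _ hq
  refine ⟨(eq_inv_smul_iff₀ hQ).2 (C18.normalElt_mul_gen_zero _).symm,
    C18.gen_one_mul_normalElt _, C18.gen_two_mul_normalElt _, fun p hp => ?_⟩
  have hp0 : p ≠ 0 := by rintro rfl; exact hQ (by simpa [eq_comm] using hp)
  have hτ₂ : (C18.scale ![p, 1, p⁻¹]).comp (C18.scale ![p, 1, p⁻¹]) =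
      (C18.scale ![(q ^ (n ^ 2))⁻¹, 1, q ^ (n ^ 2)] : C18 k q n →ₐ[k] C18 k q n) := by
    have hQp : q ^ (n ^ 2) = (p ^ 2)⁻¹ := by rw [hp, inv_inv]
    rw [C18.scale_comp_scale, hQp]
    congr 1
    ext i; fin_cases i <;> simp [sq]
  refine ⟨C18.scale ![p, 1, p⁻¹], by simp, by simp, by simp,
    C18.scale_bijective fun i => ?_, C18.scale_normalElt rfl (mul_inv_cancel₀ hp0) _,
    fun x => ?_⟩
  · fin_cases i <;> simp [hp0]
  · rw [← AlgHom.comp_apply, hτ₂]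
    exact C18.mul_normalElt hq _ x

/-- in the skew polynomial algebra `C` (with `deg a₁ = deg a₃ =
n`, `deg a₂ = 2`), the element `f = a₂ⁿ − q^{n(n−1)/2} a₁a₃` is normal,
satisfying `a₁ f = q^{−n²} f a₁`, `a₂ f = f a₂`, `a₃ f = q^{n²} f a₃`;
moreover for any `p` with `p² = q^{−n²}`, the assignments `τ(a₁) = p a₁`,
`τ(a₂) = a₂`, `τ(a₃) = p⁻¹ a₃` define a graded automorphism `τ` of `C` with
`τ² = σ` (the normalizing automorphism of `f`) and `τ(f) = f`. -/
theorem stmt_18 (k : Type) [Field k] [IsAlgClosed k] [CharZero k]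
    (q : k) (hq : q ≠ 0) (n : ℕ) (hn : 1 ≤ n) :
    letI a : Fin 3 → C18 k q n := gen18 k q n
    letI f : C18 k q n := a 1 ^ n - (q ^ (n * (n - 1) / 2)) • (a 0 * a 2)
    -- the normality identities
    (a 0 * f = (q ^ (n ^ 2))⁻¹ • (f * a 0)) ∧
    (a 1 * f = f * a 1) ∧
    (a 2 * f = (q ^ (n ^ 2)) • (f * a 2)) ∧
    -- f is normal: c f = f σ(c) for an automorphism σ, and for any square
    -- root p of q^{−n²} the map τ below is an automorphism with τ² = σ and
    -- τ(f) = f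
    (∀ p : k, p ^ 2 = (q ^ (n ^ 2))⁻¹ →
      ∃ τ : C18 k q n →ₐ[k] C18 k q n,
        τ (a 0) = p • a 0 ∧ τ (a 1) = a 1 ∧ τ (a 2) = p⁻¹ • a 2 ∧
        Function.Bijective τ ∧ τ f = f ∧
        (∀ c : C18 k q n, c * f = f * τ (τ c))) :=
  stmt_18_general k q hq n
end

section
/- Let C = k⟨a₁,a₂⟩/([a₁², a₂], [a₂², a₁]) with deg a₁ = 1, deg a₂ = 3, and f = a₂² − a₁⁶. Then f is central in C, and the maps φ : C[−4] ⊕ C[−3] → C[−1] ⊕ C and ψ : C[−7] ⊕ C[−6] → C[−4] ⊕ C[−3] given by the matrices φ = [[a₂, −a₁⁴],[−a₁², a₂]] and ψ = [[a₂, a₁⁴],[a₁², a₂]] satisfy φψ = λ_f and ψφ[−3] = λ_f, i.e., (φ, ψ) is a (twisted) matrix factorization of f over C. -/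
/-- The defining relations of `C = k⟨a₁,a₂⟩/([a₁², a₂], [a₂², a₁])`
(generator `0` is `a₁`, generator `1` is `a₂`). -/
def rel19 (k : Type) [Field k] :
    FreeAlgebra k (Fin 2) → FreeAlgebra k (Fin 2) → Prop := fun x y =>
  (x = FreeAlgebra.ι k 0 ^ 2 * FreeAlgebra.ι k 1 ∧
      y = FreeAlgebra.ι k 1 * FreeAlgebra.ι k 0 ^ 2) ∨
  (x = FreeAlgebra.ι k 1 ^ 2 * FreeAlgebra.ι k 0 ∧
      y = FreeAlgebra.ι k 0 * FreeAlgebra.ι k 1 ^ 2)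

/-- The algebra `C = k⟨a₁,a₂⟩/([a₁², a₂], [a₂², a₁])` of case (c). -/
abbrev C19 (k : Type) [Field k] : Type := RingQuot (rel19 k)

/-- The generators `a₁, a₂` of `C19`. -/
noncomputable def gen19 (k : Type) [Field k] (i : Fin 2) : C19 k :=
  RingQuot.mkAlgHom k (rel19 k) (FreeAlgebra.ι k i)

lemma rel1 (k : Type) [Field k] :
    gen19 k 0 ^ 2 * gen19 k 1 = gen19 k 1 * gen19 k 0 ^ 2 := by
  have := RingQuot.mkAlgHom_rel k (s := rel19 k) (Or.inl ⟨rfl, rfl⟩)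
  simpa [gen19, map_mul, map_pow] using this

lemma rel2 (k : Type) [Field k] :
    gen19 k 1 ^ 2 * gen19 k 0 = gen19 k 0 * gen19 k 1 ^ 2 := by
  have := RingQuot.mkAlgHom_rel k (s := rel19 k) (Or.inr ⟨rfl, rfl⟩)
  simpa [gen19, map_mul, map_pow] using this

lemma gen_comm (k : Type) [Field k] (i : Fin 2) (c : C19 k) :
    c * gen19 k i ^ 2 = gen19 k i ^ 2 * c := by
  have key : ∀ j : Fin 2, gen19 k j * gen19 k i ^ 2 = gen19 k i ^ 2 * gen19 k j := by
    intro j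
    fin_cases i <;> fin_cases j
    · rw [pow_two, ← mul_assoc, mul_assoc]
    · simpa using (rel1 k).symm
    · simpa using (rel2 k).symm
    · rw [pow_two, ← mul_assoc, mul_assoc]
  obtain ⟨x, rfl⟩ := RingQuot.mkAlgHom_surjective k (rel19 k) c
  induction x using FreeAlgebra.induction with
  | grade0 r => simp [Algebra.commutes]
  | grade1 j => exact key j
  | add x y hx hy => simp only [map_add, add_mul, mul_add, hx, hy]
  | mul x y hx hy =>
    simp only [map_mul, mul_assoc, hy]
    rw [← mul_assoc, hx, mul_assoc]

/-- in `C = k⟨a₁,a₂⟩/([a₁²,a₂],[a₂²,a₁])` (with `deg a₁ = 1`,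
`deg a₂ = 3`), the element `f = a₂² − a₁⁶` is central, and the matrices
`φ = [[a₂, −a₁⁴],[−a₁², a₂]]` and `ψ = [[a₂, a₁⁴],[a₁², a₂]]` satisfy
`φψ = f·1` and `ψφ = f·1`, i.e. `(φ, ψ)` is a (twisted) matrix factorization
of `f` over `C`. -/
theorem stmt_19 (k : Type) [Field k] [CharZero k] :
    letI a₁ : C19 k := gen19 k 0
    letI a₂ : C19 k := gen19 k 1
    letI f : C19 k := a₂ ^ 2 - a₁ ^ 6
    letI φ : Matrix (Fin 2) (Fin 2) (C19 k) := !![a₂, -(a₁ ^ 4); -(a₁ ^ 2), a₂]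
    letI ψ : Matrix (Fin 2) (Fin 2) (C19 k) := !![a₂, a₁ ^ 4; a₁ ^ 2, a₂]
    (∀ c : C19 k, c * f = f * c) ∧
      φ * ψ = f • (1 : Matrix (Fin 2) (Fin 2) (C19 k)) ∧
      ψ * φ = f • (1 : Matrix (Fin 2) (Fin 2) (C19 k)) := by
  set a₁ : C19 k := gen19 k 0 with ha₁
  set a₂ : C19 k := gen19 k 1 with ha₂
  have h1 : ∀ c : C19 k, c * a₁ ^ 2 = a₁ ^ 2 * c := gen_comm k 0
  have h2 : ∀ c : C19 k, c * a₂ ^ 2 = a₂ ^ 2 * c := gen_comm k 1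
  have h14 : ∀ c : C19 k, c * a₁ ^ 4 = a₁ ^ 4 * c := by
    intro c
    have e : a₁ ^ 4 = a₁ ^ 2 * a₁ ^ 2 := by rw [← pow_add]
    rw [e, ← mul_assoc, h1, mul_assoc, h1]
  have h16 : ∀ c : C19 k, c * a₁ ^ 6 = a₁ ^ 6 * c := by
    intro c
    have e : a₁ ^ 6 = a₁ ^ 2 * a₁ ^ 4 := by rw [← pow_add]
    rw [e, ← mul_assoc, h1, mul_assoc, h14, mul_assoc]
  have hcent : ∀ c : C19 k, c * (a₂ ^ 2 - a₁ ^ 6) = (a₂ ^ 2 - a₁ ^ 6) * c := by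
    intro c
    rw [mul_sub, sub_mul, h2, h16]
  have h24 : a₂ * a₁ ^ 4 = a₁ ^ 4 * a₂ := h14 a₂
  have h12 : a₁ ^ 2 * a₁ ^ 4 = a₁ ^ 6 := by rw [← pow_add]
  have h42 : a₁ ^ 4 * a₁ ^ 2 = a₁ ^ 6 := by rw [← pow_add]
  have h22 : a₂ * a₁ ^ 2 = a₁ ^ 2 * a₂ := h1 a₂
  have nm : ∀ x y : C19 k, -x * y = -(x * y) := fun x y => neg_mul x y
  have mn : ∀ x y : C19 k, x * -y = -(x * y) := fun x y => mul_neg x y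
  have an : ∀ x : C19 k, x + -x = 0 := fun x => add_neg_cancel x
  have na : ∀ x : C19 k, -x + x = 0 := fun x => neg_add_cancel x
  have se : ∀ x y : C19 k, x + -y = x - y := fun x y => (sub_eq_add_neg x y).symm
  have ns : ∀ x y : C19 k, -x + y = y - x := fun x y => neg_add_eq_sub x y
  refine ⟨hcent, ?_, ?_⟩
  · ext i j
    fin_cases i <;> fin_cases j <;>
      simp [Matrix.mul_apply, Fin.sum_univ_succ, Matrix.one_apply]
    · rw [← pow_two, nm, h42, se]
    · rw [h24, nm, an]
    · rw [h22, nm, na]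
    · rw [← pow_two, nm, h12, ns]
  · ext i j
    fin_cases i <;> fin_cases j <;>
      simp [Matrix.mul_apply, Fin.sum_univ_succ, Matrix.one_apply]
    · rw [← pow_two, mn, h42, se]
    · rw [mn, h24, na]
    · rw [mn, h22, an]
    · rw [← pow_two, mn, h12, ns]
end
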